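/- For every natural number n, ρ(ρ(ρ(n) + 1)) = ρ(ρ(ρ(n)) + 1) + 1. -/

import Mathlib

set_option maxHeartbeats 1000000


/-- The golden ratio `φ = (1 + √5)/2`. -/
noncomputable def phi : ℝ := (1 + Real.sqrt 5) / 2

/-- The Fibonacci shift `ρ(n) = ⌊nφ + 1/φ⌋`. -/
noncomputable def rho (n : ℕ) : ℕ := ⌊(n : ℝ) * phi + 1 / phi⌋₊

lemma sqrt5_sq : Real.sqrt 5 ^ 2 = 5 := Real.sq_sqrt (by norm_num)

lemma sqrt5_lt : Real.sqrt 5 < 3 := by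
  nlinarith [sqrt5_sq, Real.sqrt_nonneg 5]

lemma sqrt5_gt : (2:ℝ) < Real.sqrt 5 := by
  nlinarith [sqrt5_sq, Real.sqrt_nonneg 5]

lemma phi_gt : (3:ℝ)/2 < phi := by unfold phi; linarith [sqrt5_gt]

lemma phi_lt : phi < 2 := by unfold phi; linarith [sqrt5_lt]

lemma phi_sq : phi ^ 2 = phi + 1 := by
  unfold phi; nlinarith [sqrt5_sq]

lemma one_div_phi : 1 / phi = phi - 1 := by
  have h : phi ≠ 0 := by have := phi_gt; intro h0; rw [h0] at this; linarith
  field_simp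
  nlinarith [phi_sq]

lemma phi_irr : Irrational phi := by
  have h5 : Irrational (Real.sqrt 5) := by
    have : Nat.Prime 5 := by norm_num
    simpa using this.irrational_sqrt
  have h1 : Irrational (1 + Real.sqrt 5) := by
    simpa using h5.ratCast_add 1
  simpa [phi, div_eq_mul_inv] using h1.div_natCast (by norm_num : (2:ℕ) ≠ 0)

lemma rho_eq (k v : ℕ) (h1 : (v:ℝ) ≤ ((k:ℝ)+1)*phi - 1)
    (h2 : ((k:ℝ)+1)*phi - 1 < (v:ℝ)+1) : rho k = v := by
  unfold rho
  have he : (k:ℝ) * phi + 1 / phi = ((k:ℝ)+1)*phi - 1 := by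
    rw [one_div_phi]; ring
  rw [he, Nat.floor_eq_iff (le_trans (Nat.cast_nonneg v) h1)]
  exact ⟨h1, h2⟩

/-- The identity `ρ(ρ(ρ(n) + 1)) = ρ(ρ(ρ(n)) + 1) + 1`. -/
theorem rho_triple_identity (n : ℕ) :
    rho (rho (rho n + 1)) = rho (rho (rho n) + 1) + 1 := by
  have hphi1 : (1:ℝ) < phi := by linarith [phi_gt]
  have hphi2 : phi < 2 := phi_lt
  set m : ℕ := n + 1 with hm
  set A : ℕ := ⌊(m:ℝ) * phi⌋₊ with hA
  have hm1 : (1:ℝ) ≤ (m:ℝ) := by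
    have : 1 ≤ m := by omega
    exact_mod_cast this
  have hxge : (1:ℝ) ≤ (m:ℝ) * phi := by nlinarith
  have hA1 : 1 ≤ A := Nat.le_floor (by exact_mod_cast hxge)
  set f : ℝ := (m:ℝ) * phi - (A:ℝ) with hf
  have hfle : (A:ℝ) ≤ (m:ℝ) * phi := Nat.floor_le (by linarith)
  have hf1 : f < 1 := by
    have := Nat.lt_floor_add_one ((m:ℝ) * phi)
    rw [hf]; rw [← hA] at this; linarith
  have hf0 : 0 < f := by
    have hne : (m:ℝ) * phi ≠ (A:ℝ) := by
      have : Irrational ((m:ℝ) * phi) := phi_irr.natCast_mul (by omega : m ≠ 0)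
      exact this.ne_nat A
    rw [hf]
    rcases lt_or_eq_of_le hfle with h | h
    · linarith
    · exact absurd h.symm hne
  have hAc : (A:ℝ) = (m:ℝ) * phi - f := by rw [hf]; ring
  have hAphi : (A:ℝ) * phi = (m:ℝ) + (A:ℝ) + f * (1 - phi) := by
    rw [hAc]; linear_combination (m:ℝ) * phi_sq
  -- Step 1 : rho n = A - 1
  have hcast1 : ((A - 1 : ℕ):ℝ) = (A:ℝ) - 1 := by
    rw [Nat.cast_sub hA1]; norm_num
  have hnm : ((n:ℝ) + 1) = (m:ℝ) := by rw [hm]; push_cast; ring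
  have h1 : rho n = A - 1 := by
    apply rho_eq
    · rw [hcast1, hnm]; linarith
    · rw [hcast1, hnm]; linarith
  have hA' : rho n + 1 = A := by omega
  have hrnA : ((rho n : ℕ):ℝ) + 1 = (A:ℝ) := by exact_mod_cast hA'
  -- Step 2 : rho (rho n) = m + A - 2
  have h2cast : ((m + A - 2 : ℕ):ℝ) = (m:ℝ) + (A:ℝ) - 2 := by
    have h2m : 2 ≤ m + A := by omega
    rw [Nat.cast_sub h2m]; push_cast; ring
  have h2 : rho (rho n) = m + A - 2 := by
    apply rho_eq
    · rw [h2cast, hrnA, hAphi]; nlinarith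
    · rw [h2cast, hrnA, hAphi]; nlinarith
  -- Step 3 : rho (rho n + 1) = rho A = m + A
  have hA1r : ((rho n + 1 : ℕ):ℝ) + 1 = (A:ℝ) + 1 := by push_cast; linarith [hrnA]
  have h3 : rho (rho n + 1) = m + A := by
    apply rho_eq
    · rw [hA1r]; push_cast; nlinarith [hAphi]
    · rw [hA1r]; push_cast; nlinarith [hAphi]
  -- Step 4 : rho (m + A) = m + 2A
  have h4 : rho (m + A) = m + 2 * A := by
    apply rho_eq
    · push_cast; nlinarith [hAphi, hAc]
    · push_cast; nlinarith [hAphi, hAc]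
  -- Step 5 : rho (m + A - 1) = m + 2A - 1
  have h5cast : ((m + 2*A - 1 : ℕ):ℝ) = (m:ℝ) + 2*(A:ℝ) - 1 := by
    have h1m : 1 ≤ m + 2*A := by omega
    rw [Nat.cast_sub h1m]; push_cast; ring
  have h5castk : ((m + A - 1 : ℕ):ℝ) + 1 = (m:ℝ) + (A:ℝ) := by
    have h1m : 1 ≤ m + A := by omega
    rw [Nat.cast_sub h1m]; push_cast; ring
  have h5 : rho (m + A - 1) = m + 2*A - 1 := by
    apply rho_eq
    · rw [h5cast, h5castk]; nlinarith [hAphi, hAc]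
    · rw [h5cast, h5castk]; nlinarith [hAphi, hAc]
  rw [h3, h4, h2]
  have : m + A - 2 + 1 = m + A - 1 := by omega
  rw [this, h5]
  omega
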